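/- Let W > 0, δ, ε ∈ (0,1), and let σ(z) = 1/(1 + e^{−z}). Let D be a probability distribution on (closed unit ball of ℝ^d) × [0,1] and let w* ∈ ℝ^d with ‖w*‖ ≤ W be such that for (x,y) ~ D the conditional expectation satisfies E[y | x] = σ(⟨w*, x⟩) almost surely. Fix w in the closed ball of radius W centered at the origin, and let (x_1,y_1),…,(x_m,y_m) be i.i.d. samples from D with m ≥ (8·e^{2W}·(W+1)²/ε²)·log(1/δ). Define err_m(v) = (1/m)·Σ_{i=1}^m (y_i − σ(⟨v, x_i⟩))². Then with probability at least 1 − δ, err_m is (ε, e^W, w*)-SLQC at w. -/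

import Mathlib

/-!
Write `a = ⟪w, x⟫`, `b = ⟪wstar, x⟫` for a sample `(x, y)` and `ξ = y - σ b` for its label noise,
which has conditional mean zero given `x`. Using `σ' ≤ 1/4`, `σ' ≥ exp (-W) / 4` on `[-W, W]` and
`4 (σ a - σ b)² ≤ (σ a - σ b) (a - b)`, each summand of `⟪∇ err(w), v - w⟫` is at most
`ε exp (-W) - 2 exp (-W) · (its share of err(w) - err(wstar)) + ξ · c(a, b)` with `|c| ≤ W + 2`.
So if `err(w) - err(wstar) > ε`, the inner product is negative as soon as the average of the
bounded, mean-zero noise terms `ξ · c(a, b)` stays below `ε exp (-W)`, which by Hoeffding's inequality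
happens with probability at least `1 - δ` for the given sample size.
-/

open RealInnerProductSpace MeasureTheory ProbabilityTheory

noncomputable def sigmoid10 (z : ℝ) : ℝ := 1 / (1 + Real.exp (-z))

open Real

theorem sigmoid10_eq_sigmoid : sigmoid10 = sigmoid := by
  funext z; rw [sigmoid10, sigmoid_def, one_div]

namespace Real

theorem sigmoid_mul_one_sub_le (x : ℝ) : sigmoid x * (1 - sigmoid x) ≤ 1 / 4 := by
  nlinarith [sq_nonneg (sigmoid x - 1 / 2)]

theorem sigmoid_mul_one_sub_eq_inv (x : ℝ) :
    sigmoid x * (1 - sigmoid x) = (2 + exp x + exp (-x))⁻¹ := by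
  rw [← sigmoid_neg, sigmoid_def, sigmoid_def, neg_neg, ← mul_inv]
  congr 1
  have h : exp (-x) * exp x = 1 := by rw [← exp_add, neg_add_cancel, exp_zero]
  linear_combination h

theorem exp_neg_div_four_le_sigmoid_mul_one_sub {x W : ℝ} (hx : |x| ≤ W) :
    exp (-W) / 4 ≤ sigmoid x * (1 - sigmoid x) := by
  have h1 : 1 ≤ exp W := one_le_exp ((abs_nonneg x).trans hx)
  have h2 : exp x ≤ exp W := exp_le_exp.2 ((le_abs_self x).trans hx)
  have h3 : exp (-x) ≤ exp W := exp_le_exp.2 ((neg_le_abs x).trans hx)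
  rw [sigmoid_mul_one_sub_eq_inv, exp_neg, div_eq_mul_inv, ← mul_inv]
  gcongr
  linarith

theorem lipschitzWith_sigmoid : LipschitzWith (1 / 4) sigmoid := by
  refine lipschitzWith_of_nnnorm_deriv_le differentiable_sigmoid fun x => ?_
  rw [← NNReal.coe_le_coe, coe_nnnorm, deriv_sigmoid, norm_of_nonneg
    (mul_nonneg (sigmoid_nonneg x) (sub_nonneg.2 (sigmoid_le_one x)))]
  simpa using sigmoid_mul_one_sub_le x

end Real

theorem Monotone.sq_sub_le_of_lipschitzWith {f : ℝ → ℝ} {K : NNReal} (hf : Monotone f)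
    (hK : LipschitzWith K f) (a b : ℝ) : (f a - f b) ^ 2 ≤ K * ((f a - f b) * (a - b)) := by
  have hL : |f a - f b| ≤ K * |a - b| := by simpa [dist_eq_norm] using hK.dist_le_mul a b
  have hsign : (f a - f b) * (a - b) = |f a - f b| * |a - b| := by
    rcases le_total a b with h | h
    · rw [abs_of_nonpos (sub_nonpos.2 (hf h)), abs_of_nonpos (sub_nonpos.2 h)]; ring
    · rw [abs_of_nonneg (sub_nonneg.2 (hf h)), abs_of_nonneg (sub_nonneg.2 h)]
  rw [hsign, ← sq_abs, sq, mul_left_comm]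
  exact mul_le_mul_of_nonneg_left hL (abs_nonneg _)

noncomputable def noiseCoeff (W a b : ℝ) : ℝ :=
  2 * (sigmoid a * (1 - sigmoid a) * (a - b) - 2 * exp (-W) * (sigmoid a - sigmoid b))

theorem abs_noiseCoeff_le {W a b : ℝ} (ha : |a| ≤ W) (hb : |b| ≤ W) :
    |noiseCoeff W a b| ≤ W + 2 := by
  have hab : |a - b| ≤ 2 * W := (abs_sub a b).trans (by linarith)
  have hslope : |sigmoid a * (1 - sigmoid a) * (a - b)| ≤ W / 2 := by
    rw [abs_mul, abs_of_nonneg (mul_nonneg (sigmoid_nonneg a) (sub_nonneg.2 (sigmoid_le_one a)))]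
    nlinarith [sigmoid_mul_one_sub_le a, abs_nonneg (a - b),
      mul_nonneg (sigmoid_nonneg a) (sub_nonneg.2 (sigmoid_le_one a))]
  have hexpW : exp (-W) * W ≤ 1 := by
    rw [exp_neg, inv_mul_le_iff₀ (exp_pos W)]
    linarith [add_one_le_exp W]
  have hsig : |2 * exp (-W) * (sigmoid a - sigmoid b)| ≤ 1 := by
    have hL : |sigmoid a - sigmoid b| ≤ 1 / 4 * |a - b| := by
      simpa [dist_eq_norm] using lipschitzWith_sigmoid.dist_le_mul a b
    rw [abs_mul, abs_of_pos (by positivity : (0 : ℝ) < 2 * exp (-W))]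
    nlinarith [exp_pos (-W)]
  rw [noiseCoeff, abs_mul, abs_two]
  linarith [abs_sub (sigmoid a * (1 - sigmoid a) * (a - b))
    (2 * exp (-W) * (sigmoid a - sigmoid b))]

-- In the application `q = ⟪x, v - wstar⟫` and `a - b = ⟪w - wstar, x⟫`,
-- so that `q - (a - b) = ⟪x, v - w⟫`.
theorem sigmoid_gradient_summand_le {W a b y q r : ℝ} (ha : |a| ≤ W) (hy : y ∈ Set.Icc 0 1)
    (hq : |q| ≤ r) :
    2 * (sigmoid a - y) * (sigmoid a * (1 - sigmoid a)) * (q - (a - b)) ≤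
      r - 2 * exp (-W) * ((y - sigmoid a) ^ 2 - (y - sigmoid b) ^ 2) +
        (y - sigmoid b) * noiseCoeff W a b := by
  set s := sigmoid a - sigmoid b
  set D := sigmoid a * (1 - sigmoid a)
  have hD : exp (-W) / 4 ≤ D := exp_neg_div_four_le_sigmoid_mul_one_sub ha
  have hD4 : D ≤ 1 / 4 := sigmoid_mul_one_sub_le a
  have hmono : s ^ 2 ≤ 1 / 4 * (s * (a - b)) := by
    exact_mod_cast sigmoid_monotone.sq_sub_le_of_lipschitzWith lipschitzWith_sigmoid a b
  have hfit : |sigmoid a - y| ≤ 1 := abs_sub_le_iff.2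
    ⟨by linarith [sigmoid_le_one a, hy.1], by linarith [sigmoid_nonneg a, hy.2]⟩
  have hD0 : 0 ≤ D := le_trans (by positivity) hD
  have hq' : 2 * (sigmoid a - y) * D * q ≤ r := calc
    _ ≤ |2 * (sigmoid a - y) * D * q| := le_abs_self _
    _ = 2 * D * (|sigmoid a - y| * |q|) := by
      rw [abs_mul, abs_mul, abs_mul, abs_two, abs_of_nonneg hD0]; ring
    _ ≤ 2 * (1 / 4) * (1 * r) := by gcongr
    _ ≤ r := by linarith [(abs_nonneg q).trans hq]
  have hcurv : exp (-W) * s ^ 2 ≤ D * (s * (a - b)) := by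
    nlinarith [mul_le_mul_of_nonneg_left hmono hD0, mul_le_mul_of_nonneg_right hD (sq_nonneg s)]
  rw [noiseCoeff]
  linear_combination hq' + 2 * hcurv

theorem integral_mul_eq_of_condExp_ae_eq {Ω : Type*} {m m₀ : MeasurableSpace Ω} {μ : Measure Ω}
    [IsFiniteMeasure μ] (hm : m ≤ m₀) {f Y g : Ω → ℝ} (hf : StronglyMeasurable[m] f) {C : ℝ}
    (hfC : ∀ᵐ ω ∂μ, ‖f ω‖ ≤ C) (hY : Integrable Y μ) (hYg : μ[Y | m] =ᵐ[μ] g) :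
    ∫ ω, f ω * Y ω ∂μ = ∫ ω, f ω * g ω ∂μ := by
  rw [← integral_condExp hm]
  refine integral_congr_ae ((condExp_stronglyMeasurable_mul_of_bound hm hf hY C hfC).trans ?_)
  filter_upwards [hYg] with ω hω
  simp [hω]

section EmpiricalRisk

variable {E : Type*} [NormedAddCommGroup E] [InnerProductSpace ℝ E]

theorem abs_inner_le_of_norm_le {W : ℝ} {w x : E} (hw : ‖w‖ ≤ W) (hx : ‖x‖ ≤ 1) :
    |⟪w, x⟫| ≤ W :=
  (abs_real_inner_le_norm w x).trans
    (by simpa using mul_le_mul hw hx (norm_nonneg x) ((norm_nonneg w).trans hw))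

noncomputable def empiricalRisk {m : ℕ} (S : Fin m → E × ℝ) (v : E) : ℝ :=
  (1 / (m : ℝ)) * ∑ i, ((S i).2 - sigmoid ⟪v, (S i).1⟫) ^ 2

noncomputable def noiseTerm (W : ℝ) (w wstar : E) (p : E × ℝ) : ℝ :=
  (p.2 - sigmoid ⟪wstar, p.1⟫) * noiseCoeff W ⟪w, p.1⟫ ⟪wstar, p.1⟫

theorem hasDerivAt_sq_sub_sigmoid (y a : ℝ) :
    HasDerivAt (fun z => (y - sigmoid z) ^ 2)
      (2 * (sigmoid a - y) * (sigmoid a * (1 - sigmoid a))) a := by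
  refine (((hasDerivAt_sigmoid a).const_sub y).pow 2).congr_deriv ?_
  norm_num
  ring

theorem hasGradientAt_empiricalRisk [CompleteSpace E] {m : ℕ} (S : Fin m → E × ℝ) (w : E) :
    HasGradientAt (empiricalRisk S)
      ((1 / (m : ℝ)) • ∑ i, (2 * (sigmoid ⟪w, (S i).1⟫ - (S i).2) *
        (sigmoid ⟪w, (S i).1⟫ * (1 - sigmoid ⟪w, (S i).1⟫))) • (S i).1) w := by
  have hinner (x : E) : HasFDerivAt (fun v : E => ⟪v, x⟫) (innerSL ℝ x) w := by
    convert (innerSL ℝ x).hasFDerivAt using 1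
    funext v; rw [innerSL_apply_apply, real_inner_comm]
  have hrisk := (HasFDerivAt.fun_sum (u := Finset.univ) fun i _ =>
    (hasDerivAt_sq_sub_sigmoid (S i).2 ⟪w, (S i).1⟫).comp_hasFDerivAt w (hinner (S i).1)).const_mul
      (1 / (m : ℝ))
  rw [hasGradientAt_iff_hasFDerivAt]
  refine hrisk.congr_fderiv ?_
  ext v
  simp [InnerProductSpace.toDual_apply_apply, Finset.mul_sum]

theorem gradient_summand_inner_le {W ε : ℝ} {w wstar v : E} {p : E × ℝ}
    (hp : ‖p.1‖ ≤ 1 ∧ p.2 ∈ Set.Icc 0 1) (hw : ‖w‖ ≤ W)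
    (hv : v ∈ Metric.closedBall wstar (ε / exp W)) :
    2 * (sigmoid ⟪w, p.1⟫ - p.2) * (sigmoid ⟪w, p.1⟫ * (1 - sigmoid ⟪w, p.1⟫)) * ⟪p.1, v - w⟫ ≤
      ε * exp (-W) - 2 * exp (-W) * ((p.2 - sigmoid ⟪w, p.1⟫) ^ 2 -
        (p.2 - sigmoid ⟪wstar, p.1⟫) ^ 2) + noiseTerm W w wstar p := by
  have hq : |⟪p.1, v - wstar⟫| ≤ ε * exp (-W) := by
    refine (abs_real_inner_le_norm _ _).trans ?_
    rw [← dist_eq_norm, exp_neg, ← div_eq_mul_inv]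
    simpa using mul_le_mul hp.1 (Metric.mem_closedBall.1 hv) dist_nonneg zero_le_one
  have hsplit : ⟪p.1, v - w⟫ = ⟪p.1, v - wstar⟫ - (⟪w, p.1⟫ - ⟪wstar, p.1⟫) := by
    rw [inner_sub_right, inner_sub_right, real_inner_comm w, real_inner_comm wstar]; ring
  rw [hsplit, noiseTerm]
  exact sigmoid_gradient_summand_le (abs_inner_le_of_norm_le hw hp.1) hp.2 hq

theorem inner_gradient_empiricalRisk_neg [CompleteSpace E] {m : ℕ} (hm : 0 < m) {W ε : ℝ}
    {w wstar v : E} (S : Fin m → E × ℝ) (hS : ∀ i, ‖(S i).1‖ ≤ 1 ∧ (S i).2 ∈ Set.Icc 0 1)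
    (hw : ‖w‖ ≤ W) (hnoise : ∑ i, noiseTerm W w wstar (S i) ≤ m * (ε * exp (-W)))
    (hgap : ε < empiricalRisk S w - empiricalRisk S wstar)
    (hv : v ∈ Metric.closedBall wstar (ε / exp W)) :
    ⟪gradient (empiricalRisk S) w, v - w⟫ < 0 := by
  have hm' : (0 : ℝ) < m := Nat.cast_pos.2 hm
  have hgapSum : ∑ i, (((S i).2 - sigmoid ⟪w, (S i).1⟫) ^ 2 -
      ((S i).2 - sigmoid ⟪wstar, (S i).1⟫) ^ 2) =
        m * (empiricalRisk S w - empiricalRisk S wstar) := by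
    rw [empiricalRisk, empiricalRisk, ← mul_sub, ← Finset.sum_sub_distrib]
    field_simp
  have hsum : ∑ i, (2 * (sigmoid ⟪w, (S i).1⟫ - (S i).2) *
        (sigmoid ⟪w, (S i).1⟫ * (1 - sigmoid ⟪w, (S i).1⟫))) * ⟪(S i).1, v - w⟫ ≤
      m * (ε * exp (-W)) - 2 * exp (-W) * (m * (empiricalRisk S w - empiricalRisk S wstar)) +
        ∑ i, noiseTerm W w wstar (S i) := by
    refine (Finset.sum_le_sum fun i _ => gradient_summand_inner_le (hS i) hw hv).trans_eq ?_
    rw [Finset.sum_add_distrib, Finset.sum_sub_distrib, ← Finset.mul_sum _ _ (2 * exp (-W)),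
      hgapSum]
    simp
  have hneg : ∑ i, (2 * (sigmoid ⟪w, (S i).1⟫ - (S i).2) *
      (sigmoid ⟪w, (S i).1⟫ * (1 - sigmoid ⟪w, (S i).1⟫))) * ⟪(S i).1, v - w⟫ < 0 := by
    nlinarith [mul_lt_mul_of_pos_left hgap (mul_pos hm' (exp_pos (-W)))]
  rw [(hasGradientAt_empiricalRisk S w).gradient, real_inner_smul_left, sum_inner]
  simp only [real_inner_smul_left]
  exact mul_neg_of_pos_of_neg (by positivity) hneg

def IsSLQCAt [CompleteSpace E] (f : E → ℝ) (ε κ : ℝ) (z x : E) : Prop :=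
  f x - f z ≤ ε ∨
    (gradient f x ≠ 0 ∧ ∀ y ∈ Metric.closedBall z (ε / κ), ⟪gradient f x, y - x⟫ ≤ 0)

theorem isSLQCAt_empiricalRisk [CompleteSpace E] {m : ℕ} (hm : 0 < m) {W ε : ℝ} (hε : 0 < ε)
    {w wstar : E} (S : Fin m → E × ℝ) (hS : ∀ i, ‖(S i).1‖ ≤ 1 ∧ (S i).2 ∈ Set.Icc 0 1)
    (hw : ‖w‖ ≤ W) (hnoise : ∑ i, noiseTerm W w wstar (S i) < m * (ε * exp (-W))) :
    IsSLQCAt (empiricalRisk S) ε (exp W) wstar w := by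
  refine or_iff_not_imp_left.2 fun hgap => ?_
  have hdesc := fun v (hv : v ∈ Metric.closedBall wstar (ε / exp W)) =>
    inner_gradient_empiricalRisk_neg hm S hS hw hnoise.le (not_le.1 hgap) hv
  refine ⟨fun h0 => ?_, fun v hv => (hdesc v hv).le⟩
  simpa [h0] using hdesc wstar (Metric.mem_closedBall_self (by positivity))

theorem abs_noiseTerm_le {W : ℝ} {w wstar : E} (hw : ‖w‖ ≤ W) (hwstar : ‖wstar‖ ≤ W)
    {p : E × ℝ} (hp : ‖p.1‖ ≤ 1 ∧ p.2 ∈ Set.Icc 0 1) : |noiseTerm W w wstar p| ≤ W + 2 := by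
  have hξ : |p.2 - sigmoid ⟪wstar, p.1⟫| ≤ 1 := abs_sub_le_iff.2
    ⟨by linarith [sigmoid_nonneg ⟪wstar, p.1⟫, hp.2.2],
      by linarith [sigmoid_le_one ⟪wstar, p.1⟫, hp.2.1]⟩
  rw [noiseTerm, abs_mul]
  simpa using mul_le_mul hξ (abs_noiseCoeff_le (abs_inner_le_of_norm_le hw hp.1)
    (abs_inner_le_of_norm_le hwstar hp.1)) (abs_nonneg _) zero_le_one

variable [MeasurableSpace E] [OpensMeasurableSpace E]

theorem measurable_noiseTerm (W : ℝ) (w wstar : E) : Measurable (noiseTerm W w wstar) := by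
  unfold noiseTerm noiseCoeff
  fun_prop

theorem integral_noiseTerm_eq_zero {W : ℝ} {w wstar : E} (hw : ‖w‖ ≤ W) (hwstar : ‖wstar‖ ≤ W)
    {D : Measure (E × ℝ)} [IsProbabilityMeasure D]
    (hsupp : ∀ᵐ p ∂D, ‖p.1‖ ≤ 1 ∧ p.2 ∈ Set.Icc 0 1)
    (hcond : D[(fun p => p.2) | MeasurableSpace.comap Prod.fst inferInstance]
      =ᵐ[D] fun p => sigmoid ⟪wstar, p.1⟫) :
    ∫ p, noiseTerm W w wstar p ∂D = 0 := by
  set h : E → ℝ := fun x => noiseCoeff W ⟪w, x⟫ ⟪wstar, x⟫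
  have hh : Measurable h := by unfold h noiseCoeff; fun_prop
  have hhB : ∀ᵐ p ∂D, ‖h p.1‖ ≤ W + 2 := by
    filter_upwards [hsupp] with p hp
    exact abs_noiseCoeff_le (abs_inner_le_of_norm_le hw hp.1) (abs_inner_le_of_norm_le hwstar hp.1)
  have hY : Integrable (fun p : E × ℝ => p.2) D := by
    refine Integrable.of_bound measurable_snd.aestronglyMeasurable 1 ?_
    filter_upwards [hsupp] with p hp
    exact abs_le.2 ⟨by linarith [hp.2.1], hp.2.2⟩
  have hpull := integral_mul_eq_of_condExp_ae_eq measurable_fst.comap_le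
    (hh.comp (comap_measurable Prod.fst)).stronglyMeasurable hhB hY hcond
  have hint (f : E × ℝ → ℝ) (hf : Integrable f D) : Integrable (fun p => h p.1 * f p) D :=
    hf.bdd_mul (hh.comp measurable_fst).aestronglyMeasurable hhB
  have hsig : Integrable (fun p : E × ℝ => sigmoid ⟪wstar, p.1⟫) D :=
    Integrable.of_bound (Measurable.aestronglyMeasurable (by fun_prop)) 1 (ae_of_all _ fun p =>
      abs_le.2 ⟨by linarith [sigmoid_nonneg ⟪wstar, p.1⟫], sigmoid_le_one _⟩)
  have hsplit : noiseTerm W w wstar = fun p => h p.1 * p.2 - h p.1 * sigmoid ⟪wstar, p.1⟫ := by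
    funext p; simp only [noiseTerm, h]; ring
  rw [hsplit, integral_sub (hint _ hY) (hint _ hsig), sub_eq_zero]
  exact hpull

end EmpiricalRisk

theorem measureReal_sum_comp_ge_le {Ω α ι : Type*} [MeasurableSpace Ω] [MeasurableSpace α]
    [Fintype ι] {μ : Measure Ω} [IsProbabilityMeasure μ] {D : Measure α} {Z : ι → Ω → α}
    (hZ : ∀ i, Measurable (Z i)) (hindep : iIndepFun Z μ) (hlaw : ∀ i, μ.map (Z i) = D)
    {g : α → ℝ} (hg : Measurable g) {B : ℝ} (hgB : ∀ᵐ p ∂D, |g p| ≤ B)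
    (hmean : ∫ p, g p ∂D = 0) {t : ℝ} (ht : 0 ≤ t) :
    μ.real {ω | t ≤ ∑ i, g (Z i ω)} ≤ exp (-t ^ 2 / (2 * Fintype.card ι * B ^ 2)) := by
  have hsubG (i : ι) : HasSubgaussianMGF (g ∘ Z i) ((‖B - -B‖₊ / 2) ^ 2) μ := by
    refine hasSubgaussianMGF_of_mem_Icc_of_integral_eq_zero (hg.comp (hZ i)).aemeasurable ?_ ?_
    · refine ae_of_ae_map (p := fun p => g p ∈ Set.Icc (-B) B) (hZ i).aemeasurable ?_
      rw [hlaw i]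
      filter_upwards [hgB] with p hp using abs_le.1 hp
    · rw [← hmean, ← hlaw i, integral_map (hZ i).aemeasurable hg.aestronglyMeasurable]
      rfl
  have h := HasSubgaussianMGF.measure_sum_ge_le_of_iIndepFun
    (hindep.comp (fun _ => g) fun _ => hg) (s := Finset.univ) (fun i _ => hsubG i) ht
  have hc : ((∑ _i : ι, (‖B - -B‖₊ / 2) ^ 2 : NNReal) : ℝ) = Fintype.card ι * B ^ 2 := by
    push_cast [Finset.sum_const, Finset.card_univ, nsmul_eq_mul]
    rw [Real.norm_eq_abs, sub_neg_eq_add, ← two_mul, abs_mul, abs_two, div_pow, mul_pow, sq_abs]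
    ring
  rwa [hc, ← mul_assoc] at h

theorem exp_neg_sq_div_le_of_sample_size {W ε δ : ℝ} {m : ℕ} (hW : 0 ≤ W) (hε : 0 < ε)
    (hδ : 0 < δ) (hm : (m : ℝ) ≥ 8 * exp (2 * W) * (W + 1) ^ 2 / ε ^ 2 * log (1 / δ)) :
    exp (-(m * (ε * exp (-W))) ^ 2 / (2 * m * (W + 2) ^ 2)) ≤ δ := by
  rw [← exp_log hδ, exp_le_exp, neg_div, neg_le, ← log_inv, ← one_div]
  rcases le_or_gt (log (1 / δ)) 0 with hL | hL
  · exact hL.trans (by positivity)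
  have hm0 : (0 : ℝ) < m := lt_of_lt_of_le (by positivity) hm
  have hexp : exp (2 * W) * exp (-W) ^ 2 = 1 := by
    rw [sq, ← exp_add, ← exp_add, ← exp_zero]; ring_nf
  have key : 8 * (W + 1) ^ 2 * log (1 / δ) ≤ m * (ε * exp (-W)) ^ 2 := calc
    _ = (8 * exp (2 * W) * (W + 1) ^ 2 / ε ^ 2 * log (1 / δ)) * (ε * exp (-W)) ^ 2 := by
      field_simp
      rw [mul_comm W, hexp]
    _ ≤ m * (ε * exp (-W)) ^ 2 := mul_le_mul_of_nonneg_right hm (sq_nonneg _)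
  have hB : (W + 2) ^ 2 ≤ 4 * (W + 1) ^ 2 := by nlinarith
  rw [le_div_iff₀ (by positivity)]
  nlinarith [mul_le_mul_of_nonneg_left key hm0.le,
    mul_le_mul_of_nonneg_left hB (by positivity : (0 : ℝ) ≤ 2 * m * log (1 / δ))]

theorem stmt_10_general {d : ℕ} (W δ ε : ℝ)
    (hδ : δ ∈ Set.Ioo (0 : ℝ) 1) (hε : ε ∈ Set.Ioo (0 : ℝ) 1)
    (D : Measure (EuclideanSpace ℝ (Fin d) × ℝ)) [IsProbabilityMeasure D]
    (hsupp : D {p | ‖p.1‖ ≤ 1 ∧ p.2 ∈ Set.Icc (0 : ℝ) 1} = 1)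
    (wstar : EuclideanSpace ℝ (Fin d)) (hwstar : ‖wstar‖ ≤ W)
    (hcond : D[(fun p => p.2) | MeasurableSpace.comap Prod.fst inferInstance]
      =ᵐ[D] fun p => sigmoid10 ⟪wstar, p.1⟫)
    (w : EuclideanSpace ℝ (Fin d)) (hw : w ∈ Metric.closedBall 0 W)
    {Ω : Type*} [MeasurableSpace Ω] (μ : Measure Ω) [IsProbabilityMeasure μ]
    (m : ℕ) (hm : (m : ℝ) ≥ 8 * Real.exp (2 * W) * (W + 1) ^ 2 / ε ^ 2 * Real.log (1 / δ))
    (Z : Fin m → Ω → EuclideanSpace ℝ (Fin d) × ℝ) (hZmeas : ∀ i, Measurable (Z i))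
    (hZindep : iIndepFun Z μ)
    (hZlaw : ∀ i, Measure.map (Z i) μ = D)
    (err : Ω → EuclideanSpace ℝ (Fin d) → ℝ)
    (herr : ∀ ω v, err ω v = (1 / (m : ℝ)) * ∑ i, ((Z i ω).2 - sigmoid10 ⟪v, (Z i ω).1⟫) ^ 2) :
    μ {ω | err ω w - err ω wstar ≤ ε ∨
        (gradient (err ω) w ≠ 0 ∧
          ∀ v ∈ Metric.closedBall wstar (ε / Real.exp W),
            ⟪gradient (err ω) w, v - w⟫ ≤ 0)} ≥ ENNReal.ofReal (1 - δ) := by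
  obtain ⟨hδ0, hδ1⟩ := hδ
  obtain ⟨hε0, -⟩ := hε
  rw [sigmoid10_eq_sigmoid] at hcond herr
  have hw' : ‖w‖ ≤ W := by simpa using hw
  have hW : 0 ≤ W := (norm_nonneg wstar).trans hwstar
  have hm0 : 0 < m := by
    have hL : 0 < log (1 / δ) := log_pos ((one_lt_div hδ0).2 hδ1)
    exact Nat.cast_pos.1 (lt_of_lt_of_le (by positivity) hm)
  have hsuppAE : ∀ᵐ p ∂D, ‖p.1‖ ≤ 1 ∧ p.2 ∈ Set.Icc (0 : ℝ) 1 :=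
    (mem_ae_iff_prob_eq_one (by measurability)).2 hsupp
  have hsample : ∀ᵐ ω ∂μ, ∀ i, ‖(Z i ω).1‖ ≤ 1 ∧ (Z i ω).2 ∈ Set.Icc (0 : ℝ) 1 :=
    ae_all_iff.2 fun i => ae_of_ae_map (hZmeas i).aemeasurable (by rwa [hZlaw i])
  set bad := {ω | (m : ℝ) * (ε * exp (-W)) ≤ ∑ i, noiseTerm W w wstar (Z i ω)}
  have hbad : MeasurableSet bad := measurableSet_le measurable_const
    (Finset.measurable_sum _ fun i _ => (measurable_noiseTerm W w wstar).comp (hZmeas i))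
  have htail : μ.real bad ≤ δ := by
    refine (measureReal_sum_comp_ge_le hZmeas hZindep hZlaw (measurable_noiseTerm W w wstar)
      (hsuppAE.mono fun p hp => abs_noiseTerm_le hw' hwstar hp)
      (integral_noiseTerm_eq_zero hw' hwstar hsuppAE hcond) (by positivity)).trans ?_
    simpa using exp_neg_sq_div_le_of_sample_size hW hε0 hδ0 hm
  have hgood : ∀ᵐ ω ∂μ, ω ∈ badᶜ → IsSLQCAt (err ω) ε (exp W) wstar w := by
    filter_upwards [hsample] with ω hS (hgood : ¬ (_ : ℝ) ≤ _)
    rw [show err ω = empiricalRisk fun i => Z i ω from funext (herr ω)]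
    exact isSLQCAt_empiricalRisk hm0 hε0 _ hS hw' (not_le.1 hgood)
  calc ENNReal.ofReal (1 - δ) ≤ ENNReal.ofReal (μ.real badᶜ) :=
        ENNReal.ofReal_le_ofReal (by rw [probReal_compl_eq_one_sub hbad]; linarith)
    _ = μ badᶜ := ofReal_measureReal
    _ ≤ _ := measure_mono_ae hgood

theorem stmt_10 {d : ℕ} (W δ ε : ℝ) (hW : 0 < W)
    (hδ : δ ∈ Set.Ioo (0 : ℝ) 1) (hε : ε ∈ Set.Ioo (0 : ℝ) 1)
    (D : Measure (EuclideanSpace ℝ (Fin d) × ℝ)) [IsProbabilityMeasure D]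
    (hsupp : D {p | ‖p.1‖ ≤ 1 ∧ p.2 ∈ Set.Icc (0 : ℝ) 1} = 1)
    (wstar : EuclideanSpace ℝ (Fin d)) (hwstar : ‖wstar‖ ≤ W)
    (hcond : D[(fun p => p.2) | MeasurableSpace.comap Prod.fst inferInstance]
      =ᵐ[D] fun p => sigmoid10 ⟪wstar, p.1⟫)
    (w : EuclideanSpace ℝ (Fin d)) (hw : w ∈ Metric.closedBall 0 W)
    {Ω : Type*} [MeasurableSpace Ω] (μ : Measure Ω) [IsProbabilityMeasure μ]
    (m : ℕ) (hm : (m : ℝ) ≥ 8 * Real.exp (2 * W) * (W + 1) ^ 2 / ε ^ 2 * Real.log (1 / δ))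
    (Z : Fin m → Ω → EuclideanSpace ℝ (Fin d) × ℝ) (hZmeas : ∀ i, Measurable (Z i))
    (hZindep : iIndepFun Z μ)
    (hZlaw : ∀ i, Measure.map (Z i) μ = D)
    (err : Ω → EuclideanSpace ℝ (Fin d) → ℝ)
    (herr : ∀ ω v, err ω v = (1 / (m : ℝ)) * ∑ i, ((Z i ω).2 - sigmoid10 ⟪v, (Z i ω).1⟫) ^ 2) :
    μ {ω | err ω w - err ω wstar ≤ ε ∨
        (gradient (err ω) w ≠ 0 ∧
          ∀ v ∈ Metric.closedBall wstar (ε / Real.exp W),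
            ⟪gradient (err ω) w, v - w⟫ ≤ 0)} ≥ ENNReal.ofReal (1 - δ) :=
  stmt_10_general W δ ε hδ hε D hsupp wstar hwstar hcond w hw μ m hm Z hZmeas hZindep hZlaw err herr
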